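/- For every directed s-t path P in G_φ and every clause index j ∈ {1,…,m}, the total cost of P under c^j equals c^j of the unique bridge edge contained in P; in particular the cost of every s-t path under every scenario c^j is either 0 or 1. -/

import Mathlib

/-!
Split the vertices into those before the bridges (`s` and the `¹`-vertices) and those after
them (the `²`-vertices and `t`). No edge leads back, and the edges that cross over are exactly
the bridges, so an `s`-`t` path crosses exactly once. Only bridges carry cost, and at most 1,
so the cost of the path is the cost of that one bridge.
-/

/-- Vertices of the graph `G_φ`: source `s`, sink `t`, and for each variable index
`i ∈ {1,…,n}` the four vertices `tᵢ¹, tᵢ², fᵢ¹, fᵢ²`.  Here `Vtx.mid i second isTrue`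
is `tᵢ` if `isTrue = true`, `fᵢ` if `isTrue = false`; superscript `2` iff `second = true`. -/
inductive Vtx (n : ℕ) : Type where
  | s : Vtx n
  | t : Vtx n
  | mid (i : Fin n) (second : Bool) (isTrue : Bool) : Vtx n
deriving DecidableEq

/-- The directed edges of `G_φ`. -/
def GEdge (n : ℕ) : Vtx n → Vtx n → Prop :=
  fun a b =>
    match a, b with
    | .s, .mid i false _ => (i : ℕ) = 0
    | .mid i false _, .mid j false _ => (j : ℕ) = (i : ℕ) + 1
    | .mid i true _, .mid j true _ => (j : ℕ) = (i : ℕ) + 1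
    | .mid i false v, .mid j true w => j = i ∧ w = v
    | .mid i true _, .t => (i : ℕ) = n - 1
    | _, _ => False

/-- Whether `(a, b)` is a bridge edge, i.e. of the form `(tᵢ¹,tᵢ²)` or `(fᵢ¹,fᵢ²)`. -/
def isBridgeB (n : ℕ) : Vtx n → Vtx n → Bool
  | .mid i false v, .mid j true w => i == j && v == w
  | _, _ => false

/-- The edge costs `c^j` determined by a clause `C` (a set of literals `(i, ε)`):
a bridge edge `(tᵢ¹,tᵢ²)` (resp. `(fᵢ¹,fᵢ²)`) costs `0` if `(i,true) ∈ C`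
(resp. `(i,false) ∈ C`) and `1` otherwise; all non-bridge edges cost `0`. -/
def cost (n : ℕ) (C : Finset (Fin n × Bool)) : Vtx n → Vtx n → ℕ
  | .mid i false v, .mid j true w =>
      if j = i ∧ w = v then (if (i, v) ∈ C then 0 else 1) else 0
  | _, _ => 0

/-- The cost of a path (list of vertices) under the scenario of clause `C`:
the sum of the edge costs over consecutive pairs. -/
def pathCost (n : ℕ) (C : Finset (Fin n × Bool)) (P : List (Vtx n)) : ℕ :=
  ((P.zip P.tail).map fun q => cost n C q.1 q.2).sum

/-- A directed `s`-`t` path in `G_φ`: consecutive pairs are edges, vertices are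
pairwise distinct, the first vertex is `s` and the last is `t`. -/
def isSTPath (n : ℕ) (P : List (Vtx n)) : Prop :=
  P.Chain' (GEdge n) ∧ P.Nodup ∧ P.head? = some Vtx.s ∧ P.getLast? = some Vtx.t

namespace List

variable {α : Type*}

theorem sum_map_eq_sum_map_filter {M : Type*} [AddMonoid M] {l : List α} {f : α → M}
    {p : α → Bool} (hf : ∀ a ∈ l, p a = false → f a = 0) :
    (l.map f).sum = ((l.filter p).map f).sum := by
  induction l with
  | nil => rfl
  | cons a l ih =>
    cases ha : p a <;> simp_all

theorem IsChain.rel_of_mem_zip_tail {R : α → α → Prop} {l : List α} (h : l.IsChain R)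
    {q : α × α} (hq : q ∈ l.zip l.tail) : R q.1 q.2 := by
  induction l with
  | nil => simp at hq
  | cons a l ih =>
    cases l with
    | nil => simp at hq
    | cons b l =>
      rw [isChain_cons_cons] at h
      rcases mem_cons.mp hq with rfl | hq
      · exact h.1
      · exact ih h.2 hq

theorem IsChain.exists_filter_zip_tail_eq_singleton {R : α → α → Prop} {p : α → Bool}
    (hp : ∀ a b, R a b → p a = true → p b = true) {L : List α} (h : L.IsChain R) {a z : α}
    (ha : L.head? = some a) (hpa : p a = false) (hz : L.getLast? = some z) (hpz : p z = true) :
    ∃ q, (L.zip L.tail).filter (fun q => !p q.1 && p q.2) = [q] := by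
  induction L generalizing a with
  | nil => simp at ha
  | cons x l ih =>
    obtain rfl : x = a := by simpa using ha
    cases l with
    | nil => simp_all
    | cons b l =>
      rw [isChain_cons_cons] at h
      rw [getLast?_cons_cons] at hz
      cases hb : p b
      · obtain ⟨q, hq⟩ := ih h.2 rfl hb hz
        exact ⟨q, by simpa [hpa, hb] using hq⟩
      · have hafter : ∀ y ∈ b :: l, p y = true :=
          fun y hy => h.2.induction (p · = true) _ hp (fun _ => hb) y hy
        refine ⟨(x, b), ?_⟩
        rw [tail_cons, zip_cons_cons, filter_cons, filter_eq_nil_iff.mpr]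
        · simp [hpa, hb]
        · intro q hq
          simp [hafter q.1 (of_mem_zip hq).1]

end List

namespace Vtx

variable {n : ℕ}

def afterBridge : Vtx n → Bool
  | .s => false
  | .t => true
  | .mid _ second _ => second

theorem afterBridge_of_gEdge {a b : Vtx n} (h : GEdge n a b) (ha : a.afterBridge) :
    b.afterBridge := by
  rcases a with _ | _ | ⟨i, _ | _, v⟩ <;> rcases b with _ | _ | ⟨j, _ | _, w⟩ <;>
    simp_all [GEdge, afterBridge]

end Vtx

variable {n : ℕ}

theorem isBridgeB_of_gEdge {a b : Vtx n} (h : GEdge n a b) :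
    isBridgeB n a b = (!a.afterBridge && b.afterBridge) := by
  rcases a with _ | _ | ⟨i, _ | _, v⟩ <;> rcases b with _ | _ | ⟨j, _ | _, w⟩ <;>
    simp_all [GEdge, isBridgeB, Vtx.afterBridge]

theorem cost_eq_zero_of_isBridgeB_eq_false (C : Finset (Fin n × Bool)) {a b : Vtx n}
    (h : isBridgeB n a b = false) : cost n C a b = 0 := by
  unfold cost
  split
  · rw [if_neg]
    rintro ⟨rfl, rfl⟩
    simp [isBridgeB] at h
  · rfl

theorem cost_le_one (C : Finset (Fin n × Bool)) (a b : Vtx n) : cost n C a b ≤ 1 := by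
  unfold cost
  split
  · split_ifs <;> simp
  · exact zero_le_one

theorem stmt6_general (n m : ℕ)
    (C : Fin m → Finset (Fin n × Bool))
    (j : Fin m) (P : List (Vtx n)) (hP : isSTPath n P) :
    (∀ q ∈ P.zip P.tail, isBridgeB n q.1 q.2 = true →
        pathCost n (C j) P = cost n (C j) q.1 q.2) ∧
    (∃! q, q ∈ P.zip P.tail ∧ isBridgeB n q.1 q.2 = true) ∧
    (pathCost n (C j) P = 0 ∨ pathCost n (C j) P = 1) := by
  obtain ⟨hchain, -, hhead, hlast⟩ := hP
  replace hchain : P.IsChain (GEdge n) := hchain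
  obtain ⟨q₀, hq₀⟩ := hchain.exists_filter_zip_tail_eq_singleton (p := Vtx.afterBridge)
    (fun _ _ => Vtx.afterBridge_of_gEdge) hhead rfl hlast rfl
  rw [← List.filter_congr fun q hq => isBridgeB_of_gEdge (hchain.rel_of_mem_zip_tail hq)] at hq₀
  have hbridge : ∀ q, q ∈ P.zip P.tail ∧ isBridgeB n q.1 q.2 = true ↔ q = q₀ := by
    intro q
    simpa using congrArg (q ∈ ·) hq₀
  have hcost : pathCost n (C j) P = cost n (C j) q₀.1 q₀.2 := by
    have hoff : ∀ q ∈ P.zip P.tail, isBridgeB n q.1 q.2 = false → cost n (C j) q.1 q.2 = 0 :=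
      fun _ _ => cost_eq_zero_of_isBridgeB_eq_false _
    rw [pathCost, List.sum_map_eq_sum_map_filter hoff, hq₀]
    simp
  refine ⟨fun q hq hb => ?_, ⟨q₀, (hbridge q₀).2 rfl, fun q hq => (hbridge q).1 hq⟩, ?_⟩
  · rw [hcost, (hbridge q).1 ⟨hq, hb⟩]
  · have := cost_le_one (C j) q₀.1 q₀.2
    omega

/-- For every directed `s`-`t` path `P` in `G_φ` and every clause index `j`, the total
cost of `P` under `c^j` equals `c^j` of the (unique, and existing) bridge edge of `P`;
in particular the cost of every `s`-`t` path under every scenario is either 0 or 1. -/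
theorem stmt6 (n m : ℕ) (hn : 1 ≤ n) (hm : 1 ≤ m)
    (C : Fin m → Finset (Fin n × Bool)) (hC : ∀ j, (C j).card ≤ 3)
    (j : Fin m) (P : List (Vtx n)) (hP : isSTPath n P) :
    (∀ q ∈ P.zip P.tail, isBridgeB n q.1 q.2 = true →
        pathCost n (C j) P = cost n (C j) q.1 q.2) ∧
    (∃! q, q ∈ P.zip P.tail ∧ isBridgeB n q.1 q.2 = true) ∧
    (pathCost n (C j) P = 0 ∨ pathCost n (C j) P = 1) :=
  stmt6_general n m C j P hP
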